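/- arXiv:1803.09953 — 8 statements merged into one kernel-verified Lean document; each statement's English description precedes it below -/
import Mathlib

section
/- Let h > 0 and α, β be real numbers with β ≠ 0. Then the set of complex solutions s of the characteristic equation s − α = β·exp(−s·h) is nonempty and possesses an element of maximal real part; that is, there exists a root s₀ with s₀ − α = β·exp(−s₀·h) such that every root s of the equation satisfies Re(s) ≤ Re(s₀). (This is the statement that the rightmost eigenvalue exists and corresponds to the principal branch W₀ of the Lambert W function.) -/
/-!
Substituting `w = (s - α) h` turns the characteristic equation into `w e^w = β h e^{-α h}`, whose
right-hand side is real. Every real `c` is a value of `w ↦ w e^w`: for `c ≥ -1/e` at a real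
`w ≥ -1`, and for `c < -1/e` on the curve `w = -y cot y + i y`, `0 < y < π`, along which `w e^w` is
real and runs from `-1/e` down to `-∞`. So there is a root, and the roots form a closed set. A
root satisfies `|s - α| = |β| e^{-h Re s}`, so for `h > 0` the roots to the right of a given one
are bounded, and `Re` attains its maximum on the roots.
-/

open Filter Set Topology

namespace Real

noncomputable def mulExpCurveValue (y : ℝ) : ℝ := -(y / sin y) * exp (-(y * cot y))

theorem mulExpCurveValue_eq :
    mulExpCurveValue = fun y => -(y / sin y) * exp (-(y / sin y * cos y)) := by
  ext y
  rw [mulExpCurveValue, cot_eq_cos_div_sin]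
  ring_nf

theorem tendsto_div_sin_nhdsGT_zero : Tendsto (fun y => y / sin y) (𝓝[>] 0) (𝓝 1) := by
  have hsinc : Tendsto (fun y => (sinc y)⁻¹) (𝓝[>] 0) (𝓝 1) := by
    simpa using ((continuous_sinc.tendsto 0).inv₀ (by simp)).mono_left nhdsWithin_le_nhds
  refine hsinc.congr' (eventually_nhdsWithin_of_forall fun y (hy : 0 < y) => ?_)
  rw [sinc_of_ne_zero hy.ne', inv_div]

theorem tendsto_div_sin_nhdsLT_pi : Tendsto (fun y => y / sin y) (𝓝[<] π) atTop := by
  have hsin : Tendsto sin (𝓝[<] π) (𝓝[>] 0) := by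
    refine tendsto_nhdsWithin_iff.2 ⟨?_, ?_⟩
    · simpa using (continuous_sin.tendsto π).mono_left nhdsWithin_le_nhds
    · filter_upwards [Ioo_mem_nhdsLT pi_pos] with y hy using sin_pos_of_pos_of_lt_pi hy.1 hy.2
  have hid : Tendsto (fun y : ℝ => y) (𝓝[<] π) (𝓝 π) := tendsto_id.mono_left nhdsWithin_le_nhds
  simpa only [div_eq_mul_inv, Function.comp_def] using
    hid.pos_mul_atTop pi_pos (tendsto_inv_nhdsGT_zero.comp hsin)

theorem tendsto_mulExpCurveValue_nhdsGT_zero :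
    Tendsto mulExpCurveValue (𝓝[>] 0) (𝓝 (-exp (-1))) := by
  have hcos : Tendsto cos (𝓝[>] 0) (𝓝 1) := by
    simpa using (continuous_cos.tendsto 0).mono_left nhdsWithin_le_nhds
  have h := tendsto_div_sin_nhdsGT_zero
  rw [mulExpCurveValue_eq]
  simpa using (h.neg.mul ((continuous_exp.tendsto _).comp (h.mul hcos).neg))

theorem tendsto_mulExpCurveValue_nhdsLT_pi : Tendsto mulExpCurveValue (𝓝[<] π) atBot := by
  have hcos : Tendsto (fun y => -cos y) (𝓝[<] π) (𝓝 1) := by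
    simpa using ((continuous_cos.tendsto π).mono_left nhdsWithin_le_nhds).neg
  have h := tendsto_div_sin_nhdsLT_pi
  have hexp : Tendsto (fun y => exp (-(y / sin y * cos y))) (𝓝[<] π) atTop := by
    refine tendsto_exp_atTop.comp ?_
    simpa only [mul_neg] using h.atTop_mul_pos one_pos hcos
  rw [mulExpCurveValue_eq]
  simpa only [neg_mul, Function.comp_def] using
    tendsto_neg_atTop_atBot.comp (h.atTop_mul_atTop₀ hexp)

theorem continuousOn_mulExpCurveValue : ContinuousOn mulExpCurveValue (Ioo 0 π) := by
  have hsin : ∀ y ∈ Ioo 0 π, sin y ≠ 0 := fun y hy => (sin_pos_of_pos_of_lt_pi hy.1 hy.2).ne'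
  rw [mulExpCurveValue_eq]
  exact ContinuousOn.mul (by fun_prop (disch := exact hsin)) (by fun_prop (disch := exact hsin))

theorem Iio_subset_image_mulExpCurveValue :
    Iio (-exp (-1)) ⊆ mulExpCurveValue '' Ioo 0 π :=
  isPreconnected_Ioo.intermediate_value_Iio (le_principal_iff.2 (Ioo_mem_nhdsLT pi_pos))
    (le_principal_iff.2 (Ioo_mem_nhdsGT pi_pos)) continuousOn_mulExpCurveValue
    tendsto_mulExpCurveValue_nhdsLT_pi tendsto_mulExpCurveValue_nhdsGT_zero

theorem Ici_subset_image_mul_exp : Ici (-exp (-1)) ⊆ (fun x => x * exp x) '' Ici (-1) := by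
  have hcont : Continuous fun x : ℝ => x * exp x := by fun_prop
  simpa using isPreconnected_Ici.intermediate_value_Ici (a := -1) self_mem_Ici
    (le_principal_iff.2 (Ici_mem_atTop _)) hcont.continuousOn
    (tendsto_id.atTop_mul_atTop₀ tendsto_exp_atTop)

end Real

namespace Complex

noncomputable def mulExpCurve (y : ℝ) : ℂ := ↑(-(y * Real.cot y)) + ↑y * I

theorem mulExpCurve_mul_exp {y : ℝ} (hy : Real.sin y ≠ 0) :
    mulExpCurve y * exp (mulExpCurve y) = Real.mulExpCurveValue y := by
  have hpyth : (Real.sin y : ℂ) ^ 2 + (Real.cos y : ℂ) ^ 2 = 1 := by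
    exact_mod_cast Real.sin_sq_add_cos_sq y
  have hy' : (Real.sin y : ℂ) ≠ 0 := by exact_mod_cast hy
  rw [mulExpCurve, Real.mulExpCurveValue, exp_add, exp_mul_I, Real.cot_eq_cos_div_sin]
  push_cast
  rw [← ofReal_sin, ← ofReal_cos]
  field_simp
  linear_combination (-(y : ℂ)) * hpyth + (y * Real.sin y ^ 2 : ℂ) * I_sq

theorem exists_mul_exp_eq_ofReal (c : ℝ) : ∃ w : ℂ, w * exp w = c := by
  rcases le_or_gt (-Real.exp (-1)) c with hc | hc
  · obtain ⟨x, -, hx⟩ := Real.Ici_subset_image_mul_exp hc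
    exact ⟨x, by rw [← ofReal_exp, ← ofReal_mul]; exact congrArg _ hx⟩
  · obtain ⟨y, hy, rfl⟩ := Real.Iio_subset_image_mulExpCurveValue hc
    exact ⟨mulExpCurve y, mulExpCurve_mul_exp (Real.sin_pos_of_pos_of_lt_pi hy.1 hy.2).ne'⟩

end Complex

open Complex

def delayCharRoots (α β h : ℝ) : Set ℂ := {s | s - α = β * exp (-s * h)}

section delayCharRoots

variable {α β h : ℝ}

theorem isClosed_delayCharRoots : IsClosed (delayCharRoots α β h) :=
  isClosed_eq (by fun_prop) (by fun_prop)

theorem norm_sub_eq_of_mem_delayCharRoots {s : ℂ} (hs : s ∈ delayCharRoots α β h) :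
    ‖s - α‖ = |β| * Real.exp (-(s.re * h)) := by
  rw [hs, norm_mul, norm_real, Real.norm_eq_abs, norm_exp]
  simp [mul_re]

theorem eventually_re_le_of_mem_delayCharRoots (hh : 0 ≤ h) (r : ℝ) :
    ∀ᶠ s in cocompact ℂ ⊓ 𝓟 (delayCharRoots α β h), s.re ≤ r := by
  have hfar : ∀ᶠ s : ℂ in cocompact ℂ, |α| + |β| * Real.exp (-(r * h)) < ‖s‖ :=
    tendsto_norm_cocompact_atTop.eventually_gt_atTop _
  filter_upwards [mem_inf_of_left hfar, mem_inf_of_right (mem_principal_self _)] with s hs hroot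
  by_contra! hr
  have hexp : Real.exp (-(s.re * h)) ≤ Real.exp (-(r * h)) := by
    gcongr
  have hnorm : ‖s‖ ≤ |β| * Real.exp (-(s.re * h)) + |α| := by
    simpa [← norm_sub_eq_of_mem_delayCharRoots hroot] using norm_sub_norm_le s α
  linarith [mul_le_mul_of_nonneg_left hexp (abs_nonneg β)]

theorem ofReal_add_div_mem_delayCharRoots (hh : h ≠ 0) {w : ℂ}
    (hw : w * exp w = ↑(β * h * Real.exp (-(α * h)))) : α + w / h ∈ delayCharRoots α β h := by
  have hh' : (h : ℂ) ≠ 0 := by exact_mod_cast hh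
  have hexp : exp (-(α + w / h) * h) = exp (-(α * h)) / exp w := by
    rw [← exp_sub]
    congr 1
    field_simp
    ring
  rw [delayCharRoots, mem_ofPred_eq, hexp]
  push_cast at hw
  field_simp
  linear_combination hw

theorem delayCharRoots_nonempty (hh : h ≠ 0) : (delayCharRoots α β h).Nonempty :=
  let ⟨_, hw⟩ := exists_mul_exp_eq_ofReal (β * h * Real.exp (-(α * h)))
  ⟨_, ofReal_add_div_mem_delayCharRoots hh hw⟩

end delayCharRoots

theorem exists_rightmost_eigenvalue_general (h α β : ℝ) (hh : 0 < h) :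
    ∃ s₀ : ℂ, s₀ - (α : ℂ) = (β : ℂ) * Complex.exp (-s₀ * (h : ℂ)) ∧
      ∀ s : ℂ, s - (α : ℂ) = (β : ℂ) * Complex.exp (-s * (h : ℂ)) → s.re ≤ s₀.re := by
  obtain ⟨s₁, hs₁⟩ := delayCharRoots_nonempty (α := α) (β := β) hh.ne'
  obtain ⟨s₀, hs₀, hmax⟩ := continuous_re.continuousOn.exists_isMaxOn'
    isClosed_delayCharRoots hs₁ (eventually_re_le_of_mem_delayCharRoots hh.le s₁.re)
  exact ⟨s₀, hs₀, fun s hs => hmax hs⟩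

/-- For `h > 0` and real `α, β` with `β ≠ 0`, the set of complex solutions of the
characteristic equation `s − α = β·exp(−s·h)` is nonempty and has an element of
maximal real part (the rightmost eigenvalue, given by the principal branch `W₀`
of the Lambert W function). -/
theorem exists_rightmost_eigenvalue (h α β : ℝ) (hh : 0 < h) (hβ : β ≠ 0) :
    ∃ s₀ : ℂ, s₀ - (α : ℂ) = (β : ℂ) * Complex.exp (-s₀ * (h : ℂ)) ∧
      ∀ s : ℂ, s - (α : ℂ) = (β : ℂ) * Complex.exp (-s * (h : ℂ)) → s.re ≤ s₀.re :=
  exists_rightmost_eigenvalue_general h α β hh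
end

section
/- Let h > 0, let α, β be real numbers, and let S = u + i·v with u, v real and v ≠ 0 satisfy the characteristic equation S − α = β·exp(−S·h). Then sin(v·h) ≠ 0, and the parameters α and β are uniquely determined by S via α = u + v·cot(v·h) and β = −v·e^{u·h}/sin(v·h). -/
open Complex in
theorem characteristic_eq_iff_re_im (S : ℂ) (α β h : ℝ) :
    S - α = β * exp (-S * h) ↔
      S.re - α = β * Real.exp (-(S.re * h)) * Real.cos (S.im * h) ∧
        S.im = -(β * Real.exp (-(S.re * h)) * Real.sin (S.im * h)) := by
  rw [Complex.ext_iff]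
  simp [exp_re, exp_im, Real.cos_neg, Real.sin_neg, mul_assoc]

theorem sin_ne_zero_and_params_eq {h α β u v : ℝ} (hv : v ≠ 0)
    (hre : u - α = β * Real.exp (-(u * h)) * Real.cos (v * h))
    (him : v = -(β * Real.exp (-(u * h)) * Real.sin (v * h))) :
    Real.sin (v * h) ≠ 0 ∧ α = u + v * Real.cot (v * h) ∧
      β = -v * Real.exp (u * h) / Real.sin (v * h) := by
  have hsin : Real.sin (v * h) ≠ 0 := fun hs ↦ hv (by simpa [hs] using him)
  have hexp : Real.exp (-(u * h)) * Real.exp (u * h) = 1 := by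
    rw [← Real.exp_add, neg_add_cancel, Real.exp_zero]
  refine ⟨hsin, ?_, ?_⟩
  · rw [Real.cot_eq_cos_div_sin]
    field_simp
    linear_combination -Real.sin (v * h) * hre - Real.cos (v * h) * him
  · field_simp
    linear_combination Real.exp (u * h) * him - β * Real.sin (v * h) * hexp

theorem params_determined_by_complex_root_general (h α β u v : ℝ) (hv : v ≠ 0)
    (hS : ((u : ℂ) + (v : ℂ) * Complex.I) - (α : ℂ) =
        (β : ℂ) * Complex.exp (-((u : ℂ) + (v : ℂ) * Complex.I) * (h : ℂ))) :
    Real.sin (v * h) ≠ 0 ∧ α = u + v * Real.cot (v * h) ∧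
      β = -v * Real.exp (u * h) / Real.sin (v * h) := by
  obtain ⟨hre, him⟩ := (characteristic_eq_iff_re_im _ α β h).1 hS
  simp only [Complex.add_re, Complex.add_im, Complex.ofReal_re, Complex.ofReal_im,
    Complex.re_ofReal_mul, Complex.im_ofReal_mul, Complex.I_re, Complex.I_im, mul_zero, mul_one,
    add_zero, zero_add] at hre him
  exact sin_ne_zero_and_params_eq hv hre him

/-- If `S = u + i·v` with `v ≠ 0` satisfies the characteristic equation
`S − α = β·exp(−S·h)` with `h > 0`, then `sin(v·h) ≠ 0` and the parameters are
uniquely determined: `α = u + v·cot(v·h)` and `β = −v·e^{u·h}/sin(v·h)`. -/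
theorem params_determined_by_complex_root (h α β u v : ℝ) (hh : 0 < h) (hv : v ≠ 0)
    (hS : ((u : ℂ) + (v : ℂ) * Complex.I) - (α : ℂ) =
        (β : ℂ) * Complex.exp (-((u : ℂ) + (v : ℂ) * Complex.I) * (h : ℂ))) :
    Real.sin (v * h) ≠ 0 ∧ α = u + v * Real.cot (v * h) ∧
      β = -v * Real.exp (u * h) / Real.sin (v * h) :=
  params_determined_by_complex_root_general h α β u v hv hS
end

section
/- (Theorem 2(i), existence of feedback gains.) Let a, a₁d, b, h, u, v be real numbers with b ≠ 0, h > 0, v ≠ 0 and sin(v·h) ≠ 0, and set S = u + i·v. Define the real feedback gains k = (u + v·cot(v·h) − a)/b and k₁d = −(v·e^{u·h}/sin(v·h) + a₁d)/b. Then S satisfies the closed-loop characteristic equation S − (a + b·k) = (a₁d + b·k₁d)·exp(−S·h); that is, the prescribed non-real value S is an eigenvalue of the closed-loop system obtained with these gains. -/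
/-! With `S = u + i v`, the factor `exp(-S h) = e^{-u h}(cos(v h) - i sin(v h))` has real part
proportional to `cos(v h)` and imaginary part to `-sin(v h)`. Choosing the delay gain so that the
imaginary parts of `S - α = β exp(-S h)` agree (which forces `β = -v e^{u h} / sin(v h)`) and then
the instantaneous gain so that the real parts agree (`α = u + v cot(v h)`) places `S` on the
closed-loop spectrum. -/

open Complex

lemma exp_neg_mul_ofReal (u v h : ℝ) :
    exp (-((u : ℂ) + v * I) * h) =
      Real.exp (-(u * h)) * (Real.cos (v * h) - Real.sin (v * h) * I) := by
  have hS : -((u : ℂ) + v * I) * h = ((-(u * h) : ℝ) : ℂ) + ((-(v * h) : ℝ) : ℂ) * I := by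
    push_cast; ring
  rw [hS, exp_add, ← ofReal_exp, exp_mul_I, ← ofReal_cos, ← ofReal_sin,
    Real.cos_neg, Real.sin_neg]
  push_cast; ring

lemma sub_eq_mul_exp_neg_of_sin_ne_zero (u v h : ℝ) (hsin : Real.sin (v * h) ≠ 0) :
    ((u : ℂ) + v * I) - ((u + v * Real.cot (v * h) : ℝ) : ℂ) =
      ((-(v * Real.exp (u * h) / Real.sin (v * h)) : ℝ) : ℂ) * exp (-((u : ℂ) + v * I) * h) := by
  rw [exp_neg_mul_ofReal, Real.cot_eq_cos_div_sin, Real.exp_neg]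
  push_cast
  have hsin' : sin ((v : ℂ) * h) ≠ 0 := by exact_mod_cast hsin
  field_simp
  ring

theorem assign_complex_eigenvalue_general (a a1d b h u v : ℝ) (hb : b ≠ 0)
    (hsin : Real.sin (v * h) ≠ 0) :
    let S : ℂ := (u : ℂ) + (v : ℂ) * Complex.I
    let k : ℝ := (u + v * Real.cot (v * h) - a) / b
    let k1d : ℝ := -(v * Real.exp (u * h) / Real.sin (v * h) + a1d) / b
    S - ((a + b * k : ℝ) : ℂ) = ((a1d + b * k1d : ℝ) : ℂ) * Complex.exp (-S * (h : ℂ)) := by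
  intro S k k1d
  have hk : a + b * k = u + v * Real.cot (v * h) := by
    simp only [k]; field_simp; ring
  have hk1d : a1d + b * k1d = -(v * Real.exp (u * h) / Real.sin (v * h)) := by
    simp only [k1d]; field_simp; ring
  rw [hk, hk1d]
  exact sub_eq_mul_exp_neg_of_sin_ne_zero u v h hsin

/-- Theorem 2(i), existence of feedback gains: with `b ≠ 0`, `h > 0`, `v ≠ 0`,
`sin(v·h) ≠ 0` and `S = u + i·v`, the real gains
`k = (u + v·cot(v·h) − a)/b` and `k₁d = −(v·e^{u·h}/sin(v·h) + a₁d)/b`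
make `S` an eigenvalue of the closed-loop system, i.e.
`S − (a + b·k) = (a₁d + b·k₁d)·exp(−S·h)`. -/
theorem assign_complex_eigenvalue (a a1d b h u v : ℝ) (hb : b ≠ 0) (hh : 0 < h)
    (hv : v ≠ 0) (hsin : Real.sin (v * h) ≠ 0) :
    let S : ℂ := (u : ℂ) + (v : ℂ) * Complex.I
    let k : ℝ := (u + v * Real.cot (v * h) - a) / b
    let k1d : ℝ := -(v * Real.exp (u * h) / Real.sin (v * h) + a1d) / b
    S - ((a + b * k : ℝ) : ℂ) = ((a1d + b * k1d : ℝ) : ℂ) * Complex.exp (-S * (h : ℂ)) :=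
  assign_complex_eigenvalue_general a a1d b h u v hb hsin
end

section
/- (Theorem 2(i), delay-state-only feedback.) Let a, a₁d, b, h, u, v be real numbers with b ≠ 0, h > 0, v ≠ 0 and sin(v·h) ≠ 0, and set S = u + i·v. Then there exists a real gain k₁d such that S satisfies the characteristic equation S − a = (a₁d + b·k₁d)·exp(−S·h) if and only if a = u + v·cot(v·h); and in that case the gain is given by k₁d = ((S − a)·exp(S·h) − a₁d)/b, which is a real number. -/
/-!
Multiplying the characteristic equation by `exp (S h)` turns it into `(S − a) exp (S h) = a₁d + b k₁d`.
Since `b ≠ 0`, the right-hand side ranges over all of `ℝ` as `k₁d` does, so a real gain exists exactly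
when `(S − a) exp (S h)` is real. Its imaginary part is `e^{uh} ((u − a) sin (vh) + v cos (vh))`, which
vanishes iff `a = u + v cot (vh)` once `sin (vh) ≠ 0`.
-/

open Complex

lemma eq_mul_exp_neg_iff_mul_exp_eq (w z c : ℂ) : w = c * exp (-z) ↔ w * exp z = c := by
  rw [exp_neg, ← div_eq_mul_inv, eq_div_iff (exp_ne_zero z)]

lemma im_sub_mul_exp_mul (a u v h : ℝ) :
    (((u : ℂ) + v * I - a) * exp (((u : ℂ) + v * I) * h)).im =
      Real.exp (u * h) * ((u - a) * Real.sin (v * h) + v * Real.cos (v * h)) := by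
  have hre : (((u : ℂ) + v * I) * h).re = u * h := by simp
  have him : (((u : ℂ) + v * I) * h).im = v * h := by simp
  simp only [mul_im, sub_re, add_re, ofReal_re, mul_re, I_re, mul_zero, ofReal_im, I_im, mul_one,
    sub_self, add_zero, exp_im, hre, him, sub_im, add_im, zero_add, sub_zero, exp_re]
  ring

lemma sub_mul_add_mul_eq_zero_iff {a u v s c : ℝ} (hs : s ≠ 0) :
    (u - a) * s + v * c = 0 ↔ a = u + v * (c / s) := by
  constructor
  · intro h
    field_simp
    linarith
  · rintro rfl
    field_simp
    ring

lemma im_sub_mul_exp_mul_eq_zero_iff {a u v h : ℝ} (hsin : Real.sin (v * h) ≠ 0) :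
    (((u : ℂ) + v * I - a) * exp (((u : ℂ) + v * I) * h)).im = 0 ↔
      a = u + v * Real.cot (v * h) := by
  rw [im_sub_mul_exp_mul, mul_eq_zero, or_iff_right (Real.exp_ne_zero _), Real.cot_eq_cos_div_sin,
    sub_mul_add_mul_eq_zero_iff hsin]

lemma eq_ofReal_add_mul_re_div_sub {c b : ℝ} (hb : b ≠ 0) {w : ℂ} (hw : w.im = 0) :
    w = ((c + b * ((w - c) / b).re : ℝ) : ℂ) := by
  apply Complex.ext
  · simp only [ofReal_re, div_ofReal_re, sub_re]
    field_simp
    ring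
  · simp [hw]

theorem assign_delay_state_only_general (a a1d b h u v : ℝ) (hb : b ≠ 0)
    (hsin : Real.sin (v * h) ≠ 0) :
    let S : ℂ := (u : ℂ) + (v : ℂ) * Complex.I
    ((∃ k1d : ℝ, S - (a : ℂ) = ((a1d + b * k1d : ℝ) : ℂ) * Complex.exp (-S * (h : ℂ))) ↔
        a = u + v * Real.cot (v * h)) ∧
      (a = u + v * Real.cot (v * h) →
        (((S - (a : ℂ)) * Complex.exp (S * (h : ℂ)) - (a1d : ℂ)) / (b : ℂ)).im = 0 ∧
        S - (a : ℂ) =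
          ((a1d + b * (((S - (a : ℂ)) * Complex.exp (S * (h : ℂ)) - (a1d : ℂ)) / (b : ℂ)).re : ℝ) : ℂ) *
            Complex.exp (-S * (h : ℂ))) := by
  intro S
  have hreal := im_sub_mul_exp_mul_eq_zero_iff (a := a) (u := u) hsin
  simp only [neg_mul, eq_mul_exp_neg_iff_mul_exp_eq]
  have gain (ha : a = u + v * Real.cot (v * h)) :
      (((S - a) * exp (S * h) - a1d) / b).im = 0 ∧
        (S - a) * exp (S * h) = ((a1d + b * (((S - a) * exp (S * h) - a1d) / b).re : ℝ) : ℂ) := by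
    have hw : ((S - a) * exp (S * h)).im = 0 := hreal.2 ha
    exact ⟨by rw [div_ofReal_im, sub_im, ofReal_im, hw, sub_zero, zero_div],
      eq_ofReal_add_mul_re_div_sub hb hw⟩
  refine ⟨⟨?_, fun ha => ⟨_, (gain ha).2⟩⟩, gain⟩
  rintro ⟨k1d, hk⟩
  exact hreal.1 (by rw [hk, ofReal_im])

/-- Theorem 2(i), delay-state-only feedback: with `b ≠ 0`, `h > 0`, `v ≠ 0`,
`sin(v·h) ≠ 0` and `S = u + i·v`, there is a real gain `k₁d` with
`S − a = (a₁d + b·k₁d)·exp(−S·h)` iff `a = u + v·cot(v·h)`; in that case the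
gain `k₁d = ((S − a)·exp(S·h) − a₁d)/b` is real and achieves the assignment. -/
theorem assign_delay_state_only (a a1d b h u v : ℝ) (hb : b ≠ 0) (hh : 0 < h)
    (hv : v ≠ 0) (hsin : Real.sin (v * h) ≠ 0) :
    let S : ℂ := (u : ℂ) + (v : ℂ) * Complex.I
    ((∃ k1d : ℝ, S - (a : ℂ) = ((a1d + b * k1d : ℝ) : ℂ) * Complex.exp (-S * (h : ℂ))) ↔
        a = u + v * Real.cot (v * h)) ∧
      (a = u + v * Real.cot (v * h) →
        (((S - (a : ℂ)) * Complex.exp (S * (h : ℂ)) - (a1d : ℂ)) / (b : ℂ)).im = 0 ∧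
        S - (a : ℂ) =
          ((a1d + b * (((S - (a : ℂ)) * Complex.exp (S * (h : ℂ)) - (a1d : ℂ)) / (b : ℂ)).re : ℝ) : ℂ) *
            Complex.exp (-S * (h : ℂ))) :=
  assign_delay_state_only_general a a1d b h u v hb hsin
end

section
/- (Theorem 2(i), current-state-only feedback.) Let a, a₁d, b, h, u, v be real numbers with b ≠ 0, h > 0, v ≠ 0 and sin(v·h) ≠ 0, and set S = u + i·v. Then there exists a real gain k such that S satisfies the characteristic equation S − (a + b·k) = a₁d·exp(−S·h) if and only if a₁d = −v·e^{u·h}/sin(v·h); and in that case the gain is given by k = (S − a − a₁d·exp(−S·h))/b, which is a real number. -/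
/-!
The left-hand side `S - (a + b k)` has imaginary part `v` whatever the real gain `k`, while
`a₁d e^{-Sh} = a₁d e^{-uh} (cos vh - i sin vh)`. So a real `k` exists iff the imaginary parts
agree, `v = -a₁d e^{-uh} sin vh`, and then the real parts are matched by solving for `k`.
-/

open Complex

theorem exists_real_gain_iff {z w : ℂ} {a b : ℝ} (hb : b ≠ 0) :
    (∃ k : ℝ, z - ((a + b * k : ℝ) : ℂ) = w) ↔ z.im = w.im := by
  constructor
  · rintro ⟨k, hk⟩
    simpa using congrArg Complex.im hk
  · intro him
    refine ⟨(z.re - a - w.re) / b, Complex.ext ?_ ?_⟩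
    · simp only [sub_re, ofReal_re]
      field_simp
      ring
    · simpa using him

theorem im_eq_zero_and_sub_eq_of_im_eq {z w : ℂ} {a b : ℝ} (hb : b ≠ 0) (him : z.im = w.im) :
    ((z - a - w) / b).im = 0 ∧ z - ((a + b * ((z - a - w) / b).re : ℝ) : ℂ) = w := by
  have hreal : z - a - w = ((z.re - a - w.re : ℝ) : ℂ) :=
    Complex.ext (by simp) (by simp [him])
  rw [hreal, ← ofReal_div, ofReal_im, ofReal_re]
  refine ⟨rfl, Complex.ext ?_ (by simpa using him)⟩
  simp only [sub_re, ofReal_re]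
  field_simp
  ring

theorem im_ofReal_mul_exp_neg_mul (c u v h : ℝ) :
    ((c : ℂ) * exp (-((u : ℂ) + (v : ℂ) * I) * (h : ℂ))).im =
      -(c * Real.exp (-(u * h)) * Real.sin (v * h)) := by
  have hexp : -((u : ℂ) + (v : ℂ) * I) * (h : ℂ) = ((-(u * h) : ℝ) : ℂ) + ((-(v * h) : ℝ) : ℂ) * I := by
    push_cast
    ring
  rw [im_ofReal_mul, hexp, exp_im, add_re, add_im, ofReal_re, ofReal_im, re_ofReal_mul,
    im_ofReal_mul, I_re, I_im]
  simp only [mul_zero, add_zero, zero_add, mul_one, Real.sin_neg]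
  ring

theorem eq_neg_mul_exp_mul_sin_iff {c u v h : ℝ} (hsin : Real.sin (v * h) ≠ 0) :
    v = -(c * Real.exp (-(u * h)) * Real.sin (v * h)) ↔
      c = -v * Real.exp (u * h) / Real.sin (v * h) := by
  have hexp : Real.exp (-(u * h)) * Real.exp (u * h) = 1 := by
    rw [← Real.exp_add, neg_add_cancel, Real.exp_zero]
  rw [eq_div_iff hsin]
  constructor <;> intro H
  · linear_combination Real.exp (u * h) * H - c * Real.sin (v * h) * hexp
  · linear_combination Real.exp (-(u * h)) * H - v * hexp

theorem assign_current_state_only_general (a a1d b h u v : ℝ) (hb : b ≠ 0)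
    (hsin : Real.sin (v * h) ≠ 0) :
    let S : ℂ := (u : ℂ) + (v : ℂ) * Complex.I
    ((∃ k : ℝ, S - ((a + b * k : ℝ) : ℂ) = (a1d : ℂ) * Complex.exp (-S * (h : ℂ))) ↔
        a1d = -v * Real.exp (u * h) / Real.sin (v * h)) ∧
      (a1d = -v * Real.exp (u * h) / Real.sin (v * h) →
        (((S - (a : ℂ) - (a1d : ℂ) * Complex.exp (-S * (h : ℂ))) / (b : ℂ)).im = 0 ∧
          S - ((a + b * ((S - (a : ℂ) - (a1d : ℂ) * Complex.exp (-S * (h : ℂ))) / (b : ℂ)).re : ℝ) : ℂ) =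
            (a1d : ℂ) * Complex.exp (-S * (h : ℂ)))) := by
  intro S
  have him : S.im = ((a1d : ℂ) * exp (-S * (h : ℂ))).im ↔
      a1d = -v * Real.exp (u * h) / Real.sin (v * h) := by
    rw [im_ofReal_mul_exp_neg_mul, add_im, ofReal_im, im_ofReal_mul, I_im, mul_one, zero_add]
    exact eq_neg_mul_exp_mul_sin_iff hsin
  exact ⟨(exists_real_gain_iff hb).trans him,
    fun ha => im_eq_zero_and_sub_eq_of_im_eq hb (him.mpr ha)⟩

/-- Theorem 2(i), current-state-only feedback: with `b ≠ 0`, `h > 0`, `v ≠ 0`,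
`sin(v·h) ≠ 0` and `S = u + i·v`, there is a real gain `k` with
`S − (a + b·k) = a₁d·exp(−S·h)` iff `a₁d = −v·e^{u·h}/sin(v·h)`; in that case the
gain `k = (S − a − a₁d·exp(−S·h))/b` is real and achieves the assignment. -/
theorem assign_current_state_only (a a1d b h u v : ℝ) (hb : b ≠ 0) (hh : 0 < h)
    (hv : v ≠ 0) (hsin : Real.sin (v * h) ≠ 0) :
    let S : ℂ := (u : ℂ) + (v : ℂ) * Complex.I
    ((∃ k : ℝ, S - ((a + b * k : ℝ) : ℂ) = (a1d : ℂ) * Complex.exp (-S * (h : ℂ))) ↔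
        a1d = -v * Real.exp (u * h) / Real.sin (v * h)) ∧
      (a1d = -v * Real.exp (u * h) / Real.sin (v * h) →
        (((S - (a : ℂ) - (a1d : ℂ) * Complex.exp (-S * (h : ℂ))) / (b : ℂ)).im = 0 ∧
          S - ((a + b * ((S - (a : ℂ) - (a1d : ℂ) * Complex.exp (-S * (h : ℂ))) / (b : ℂ)).re : ℝ) : ℂ) =
            (a1d : ℂ) * Complex.exp (-S * (h : ℂ)))) :=
  assign_current_state_only_general a a1d b h u v hb hsin
end

section
/- Let h > 0 and α, β be real numbers with β·h·e^{−α·h} ≥ −e^{−1}. Then there exists a unique real number s with s ≥ α − 1/h satisfying the characteristic equation s − α = β·e^{−s·h}. -/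
/-! The substitution `w = (s - α)·h` turns the characteristic equation into `w·eʷ = β·h·e^{−α·h}`
and the constraint `s ≥ α − 1/h` into `w ≥ −1`. On `[−1, ∞)` the map `w ↦ w·eʷ` is strictly
increasing (its derivative is `(1 + w)·eʷ`) and continuous from `−e⁻¹` to `∞`, so it takes each
value `≥ −e⁻¹` exactly once: this is the principal branch of the Lambert W function. -/

open Real Set

lemma strictMonoOn_mul_exp : StrictMonoOn (fun w : ℝ => w * exp w) (Ici (-1)) := by
  refine strictMonoOn_of_deriv_pos (convex_Ici _) (by fun_prop) fun w hw => ?_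
  rw [interior_Ici, mem_Ioi] at hw
  have hd : HasDerivAt (fun w : ℝ => w * exp w) (1 * exp w + w * exp w) w :=
    (hasDerivAt_id w).mul (hasDerivAt_exp w)
  rw [hd.deriv]
  nlinarith [exp_pos w]

lemma exists_mul_exp_eq {y : ℝ} (hy : -exp (-1) ≤ y) : ∃ w, -1 ≤ w ∧ w * exp w = y := by
  have hy_le : y ≤ max 0 y * exp (max 0 y) := by
    nlinarith [one_le_exp (le_max_left 0 y), le_max_right 0 y, le_max_left 0 y]
  obtain ⟨w, hw, hwy⟩ := intermediate_value_Icc (by linarith [le_max_left 0 y])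
    (by fun_prop : Continuous fun w : ℝ => w * exp w).continuousOn
    (⟨by simpa using hy, hy_le⟩ : y ∈ Icc ((-1) * exp (-1)) (max 0 y * exp (max 0 y)))
  exact ⟨w, hw.1, hwy⟩

lemma existsUnique_mul_exp_eq {y : ℝ} (hy : -exp (-1) ≤ y) : ∃! w, -1 ≤ w ∧ w * exp w = y := by
  obtain ⟨w, hw, hwy⟩ := exists_mul_exp_eq hy
  exact ⟨w, ⟨hw, hwy⟩, fun v ⟨hv, hvy⟩ => strictMonoOn_mul_exp.injOn hv hw (hvy.trans hwy.symm)⟩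

section Substitution

variable {h : ℝ} (hh : 0 < h) (s α β : ℝ)
include hh

lemma sub_one_div_le_iff : α - 1 / h ≤ s ↔ -1 ≤ (s - α) * h := by
  rw [← div_le_iff₀ hh, neg_div]
  constructor <;> intro <;> linarith

lemma sub_eq_mul_exp_iff :
    s - α = β * exp (-s * h) ↔ (s - α) * h * exp ((s - α) * h) = β * h * exp (-α * h) := by
  have hE : β * exp (-s * h) * (h * exp ((s - α) * h)) = β * h * exp (-α * h) := by
    have : exp (-s * h) * exp ((s - α) * h) = exp (-α * h) := by rw [← exp_add]; ring_nf
    linear_combination β * h * this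
  rw [← mul_left_inj' (mul_ne_zero hh.ne' (exp_pos ((s - α) * h)).ne'), hE]
  constructor <;> intro H <;> linear_combination H

end Substitution

/-- For `h > 0` and real `α, β` with `β·h·e^{−α·h} ≥ −e^{−1}`, there exists a
unique real `s` with `s ≥ α − 1/h` satisfying `s − α = β·e^{−s·h}`. -/
theorem exists_unique_real_root (h α β : ℝ) (hh : 0 < h)
    (hβ : β * h * Real.exp (-α * h) ≥ -Real.exp (-1)) :
    ∃! s : ℝ, s ≥ α - 1 / h ∧ s - α = β * Real.exp (-s * h) := by
  let substitution : ℝ ≃ ℝ := (Equiv.subRight α).trans (Equiv.mulRight₀ h hh.ne')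
  refine (substitution.existsUnique_congr fun s => ?_).mpr (existsUnique_mul_exp_eq hβ)
  exact and_congr (sub_one_div_le_iff hh s α) (sub_eq_mul_exp_iff hh s α β)
end

section
/- (Rightmostness of the assigned real eigenvalue.) Let h > 0, let α, β be real numbers, and let S be a real solution of the characteristic equation S − α = β·e^{−S·h} satisfying (S − α)·h ≥ −1. Then every complex solution s of s − α = β·e^{−s·h} satisfies Re(s) ≤ S; that is, S is the rightmost eigenvalue of the system. -/
/-!
Suppose a root `s = x + iy` had `x > S`. Taking moduli, `|s - α| = |β| e^{-xh} ≤ |β| e^{-Sh} = |S - α|`,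
which rules out `S ≥ α`. If `S < α`, then `β < 0` and the hypothesis reads `(α - S) h ≤ 1`.
A non-real root is then impossible: the imaginary part of the equation together with
`|sin (yh)| ≤ |y| h` forces `|β| h e^{-xh} ≥ 1`, hence `(α - S) h > 1`. A second real root is
impossible too: with `c = (S - α) h ≥ -1` and `u = (x - S) h > 0` the equation becomes
`u + c = c e^{-u}`, while `c e^{-u} < u + c` by `e^{-u} > 1 - u`.
-/

open Real

section CharacteristicEquation

variable {α β h : ℝ} {s : ℂ}

theorem norm_sub_eq_of_char_eq (hs : s - α = β * Complex.exp (-s * h)) :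
    ‖s - α‖ = |β| * exp (-s.re * h) := by
  rw [hs, norm_mul, Complex.norm_real, Real.norm_eq_abs, Complex.norm_exp]
  simp

theorem re_char_eq_of_im_eq_zero (hs : s - α = β * Complex.exp (-s * h)) (him : s.im = 0) :
    s.re - α = β * exp (-s.re * h) := by
  simpa [Complex.exp_re, Complex.mul_re, him] using congrArg Complex.re hs

theorem one_le_abs_mul_exp_of_im_ne_zero (hh : 0 < h)
    (hs : s - α = β * Complex.exp (-s * h)) (him : s.im ≠ 0) :
    1 ≤ |β| * h * exp (-s.re * h) := by
  have him_eq : s.im = -(β * (exp (-s.re * h) * sin (s.im * h))) := by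
    simpa [Complex.exp_im, Complex.mul_im, Complex.exp_re, mul_comm] using congrArg Complex.im hs
  have habs : |s.im| ≤ |β| * h * exp (-s.re * h) * |s.im| :=
    calc |s.im| = |β| * exp (-s.re * h) * |sin (s.im * h)| := by
          conv_lhs => rw [him_eq]
          rw [abs_neg, abs_mul, abs_mul, abs_of_pos (exp_pos _), mul_assoc]
      _ ≤ |β| * exp (-s.re * h) * (|s.im| * h) := by
          gcongr
          exact abs_sin_le_abs.trans_eq (by rw [abs_mul, abs_of_pos hh])
      _ = |β| * h * exp (-s.re * h) * |s.im| := by ring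
  exact le_of_mul_le_mul_right (by simpa using habs) (abs_pos.2 him)

end CharacteristicEquation

theorem mul_exp_neg_lt_add {c u : ℝ} (hc : -1 ≤ c) (hu : 0 < u) : c * exp (-u) < u + c := by
  rcases le_or_gt 0 c with hc0 | hc0
  · have : exp (-u) ≤ 1 := exp_le_one_iff.2 (by linarith)
    nlinarith
  · have : 1 - u < exp (-u) := by linarith [add_one_lt_exp (x := -u) (by linarith)]
    nlinarith

theorem real_char_root_le {α β h S x : ℝ} (hh : 0 < h)
    (hS : S - α = β * exp (-S * h)) (hW : (S - α) * h ≥ -1)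
    (hx : x - α = β * exp (-x * h)) : x ≤ S := by
  by_contra! hSx
  have hshift : (x - α) * h = (S - α) * h * exp (-((x - S) * h)) := by
    have hexp : exp (-x * h) = exp (-S * h) * exp (-((x - S) * h)) := by
      rw [← exp_add]; ring_nf
    rw [hx, hS, hexp]
    ring
  have := mul_exp_neg_lt_add hW (mul_pos (sub_pos.2 hSx) hh)
  linarith

/-- Rightmostness of the assigned real eigenvalue: if `h > 0` and the real
number `S` solves `S − α = β·e^{−S·h}` with `(S − α)·h ≥ −1` (i.e. `(S−α)h` lies
in the range of the principal branch `W₀`), then every complex solution `s` of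
the characteristic equation satisfies `Re(s) ≤ S`. -/
theorem real_root_is_rightmost (h α β S : ℝ) (hh : 0 < h)
    (hS : S - α = β * Real.exp (-S * h)) (hW : (S - α) * h ≥ -1) :
    ∀ s : ℂ, s - (α : ℂ) = (β : ℂ) * Complex.exp (-s * (h : ℂ)) → s.re ≤ S := by
  intro s hs
  by_contra! hSs
  have hdecay : exp (-s.re * h) < exp (-S * h) := exp_lt_exp.2 (by nlinarith)
  rcases le_or_gt α S with hαS | hSα
  · have hβ : 0 ≤ β := nonneg_of_mul_nonneg_left (hS ▸ sub_nonneg.2 hαS) (exp_pos _)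
    have : s.re - α ≤ S - α := calc
      s.re - α ≤ ‖s - α‖ := by simpa using Complex.re_le_norm (s - α)
      _ = β * exp (-s.re * h) := by rw [norm_sub_eq_of_char_eq hs, abs_of_nonneg hβ]
      _ ≤ S - α := hS ▸ mul_le_mul_of_nonneg_left hdecay.le hβ
    linarith
  · have hβ : β < 0 := neg_of_mul_neg_left (hS ▸ sub_neg.2 hSα) (exp_pos _).le
    by_cases him : s.im = 0
    · exact hSs.not_ge (real_char_root_le hh hS hW (re_char_eq_of_im_eq_zero hs him))
    · have hgain := one_le_abs_mul_exp_of_im_ne_zero hh hs him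
      rw [abs_of_neg hβ] at hgain
      have : -β * h * exp (-S * h) = -((S - α) * h) := by rw [hS]; ring
      nlinarith [mul_pos (neg_pos.2 hβ) hh]
end

section
/- (Rightmostness of the assigned complex eigenvalue.) Let h > 0, let α, β be real numbers, and let S = u + i·v with u, v real, 0 < v·h < π, and u − α = −v·cot(v·h), be a solution of the characteristic equation S − α = β·e^{−S·h}. Then every complex solution s of s − α = β·e^{−s·h} satisfies Re(s) ≤ u; that is, S (together with its conjugate) is the rightmost eigenvalue of the system. -/
/-!
With `z = (s - α) h` the characteristic equation becomes `z e^z = β h e^{-α h}`, a real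
constant. On the curve `Re z = -θ cot θ`, `θ = Im z ∈ (0, π)`, the value of `z e^z` is
`-g θ` with `g θ = e^{-θ cot θ} θ / sin θ`, and `g` is strictly increasing with `g > 1/e`.
So if `Z` on the curve solves `z e^z = -g(Im Z)`, then: there is no real solution, since
`w e^w ≥ -1/e`; a solution with `0 < |Im z| < π` lies on the curve or its mirror image
(imaginary part of the equation), hence equals `Z` or `conj Z` by monotonicity of `g`;
and a solution with `|Im z| ≥ π` to the right of `Z` would have `|z| < |Z|` (compare
`|z| e^{Re z} = |Z| e^{Re Z}`), which forces `Re Z < 0`, so `Im Z < π/2` and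
`|Z| = Im Z / sin (Im Z) ≤ π/2 < π ≤ |z|`.
-/

open Real Set ComplexConjugate

lemma mul_cos_lt_sin {t : ℝ} (ht : t ∈ Ioo 0 π) : t * cos t < sin t := by
  have hsin := sin_pos_of_pos_of_lt_pi ht.1 ht.2
  rcases le_or_gt (cos t) 0 with hcos | hcos
  · nlinarith [ht.1]
  · have ht2 : t < π / 2 := by
      by_contra! hle
      linarith [cos_nonpos_of_pi_div_two_le_of_le hle (by linarith [ht.2, pi_pos])]
    have := lt_tan ht.1 ht2
    rwa [tan_eq_sin_div_cos, lt_div_iff₀ hcos] at this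

lemma sin_mul_cos_lt {t : ℝ} (ht : 0 < t) : sin t * cos t < t := by
  have := sin_lt (by linarith : 0 < 2 * t)
  rw [sin_two_mul] at this
  linarith

lemma strictMonoOn_div_sin : StrictMonoOn (fun t => t / sin t) (Ioo 0 π) := by
  refine strictMonoOn_of_deriv_pos (convex_Ioo 0 π) ?_ fun t ht => ?_
  · exact continuousOn_id.div continuous_sin.continuousOn
      fun t ht => (sin_pos_of_pos_of_lt_pi ht.1 ht.2).ne'
  rw [interior_Ioo] at ht
  have hsin := sin_pos_of_pos_of_lt_pi ht.1 ht.2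
  have hd : HasDerivAt (fun t => t / sin t) ((1 * sin t - t * cos t) / sin t ^ 2) t :=
    (hasDerivAt_id t).div (hasDerivAt_sin t) hsin.ne'
  rw [hd.deriv]
  exact div_pos (by linarith [mul_cos_lt_sin ht]) (pow_pos hsin 2)

lemma strictMonoOn_neg_mul_cot : StrictMonoOn (fun t => -(t * cot t)) (Ioo 0 π) := by
  simp only [cot_eq_cos_div_sin, ← mul_div_assoc, ← neg_div]
  refine strictMonoOn_of_deriv_pos (convex_Ioo 0 π) ?_ fun t ht => ?_
  · exact (continuousOn_id.mul continuous_cos.continuousOn).neg.div continuous_sin.continuousOn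
      fun t ht => (sin_pos_of_pos_of_lt_pi ht.1 ht.2).ne'
  rw [interior_Ioo] at ht
  have hsin := sin_pos_of_pos_of_lt_pi ht.1 ht.2
  have hd : HasDerivAt (fun t => -(t * cos t) / sin t)
      ((t * (sin t ^ 2 + cos t ^ 2) - sin t * cos t) / sin t ^ 2) t :=
    (((hasDerivAt_id' t).mul (hasDerivAt_cos t)).neg.div (hasDerivAt_sin t)
      hsin.ne').congr_deriv (by simp only [Pi.neg_apply, Pi.mul_apply]; ring)
  rw [hd.deriv, sin_sq_add_cos_sq, mul_one]
  exact div_pos (sub_pos.2 (sin_mul_cos_lt ht.1)) (pow_pos hsin 2)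

/-- The curve `W₀(BC)`: the image of the branch cut `(-∞, -1/e)` under the principal branch
of the Lambert `W` function. -/
noncomputable def principalBranchBoundary : Set ℂ :=
  {z | z.im ∈ Ioo 0 π ∧ z.re = -(z.im * cot z.im)}

noncomputable def boundaryValue (θ : ℝ) : ℝ := exp (-(θ * cot θ)) * (θ / sin θ)

lemma re_mul_exp (z : ℂ) :
    (z * Complex.exp z).re = exp z.re * (z.re * cos z.im - z.im * sin z.im) := by
  simp only [Complex.mul_re, Complex.exp_re, Complex.exp_im]
  ring

lemma im_mul_exp (z : ℂ) :
    (z * Complex.exp z).im = exp z.re * (z.re * sin z.im + z.im * cos z.im) := by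
  simp only [Complex.mul_im, Complex.exp_re, Complex.exp_im]
  ring

lemma mul_exp_eq_neg_boundaryValue {z : ℂ} (hz : z ∈ principalBranchBoundary) :
    z * Complex.exp z = -(boundaryValue z.im : ℂ) := by
  obtain ⟨hθ, hre⟩ := hz
  have hsin := (sin_pos_of_pos_of_lt_pi hθ.1 hθ.2).ne'
  apply Complex.ext
  · rw [re_mul_exp, Complex.neg_re, Complex.ofReal_re, boundaryValue, ← hre, ← mul_neg]
    congr 1
    rw [hre, cot_eq_cos_div_sin]
    field_simp
    linear_combination (-z.im) * sin_sq_add_cos_sq z.im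
  · rw [im_mul_exp, Complex.neg_im, Complex.ofReal_im, neg_zero, hre, cot_eq_cos_div_sin]
    field_simp
    ring

lemma mem_principalBranchBoundary_of_im_mul_exp_eq_zero {z : ℂ} (hz : z.im ∈ Ioo 0 π)
    (h : (z * Complex.exp z).im = 0) : z ∈ principalBranchBoundary := by
  refine ⟨hz, ?_⟩
  rw [im_mul_exp, mul_eq_zero, or_iff_right (exp_pos _).ne'] at h
  have hsin := (sin_pos_of_pos_of_lt_pi hz.1 hz.2).ne'
  rw [cot_eq_cos_div_sin]
  field_simp
  linear_combination h

lemma boundaryValue_pos {θ : ℝ} (hθ : θ ∈ Ioo 0 π) : 0 < boundaryValue θ :=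
  mul_pos (exp_pos _) (div_pos hθ.1 (sin_pos_of_pos_of_lt_pi hθ.1 hθ.2))

lemma strictMonoOn_boundaryValue : StrictMonoOn boundaryValue (Ioo 0 π) := by
  intro a ha b hb hab
  exact mul_lt_mul (exp_lt_exp.2 (strictMonoOn_neg_mul_cot ha hb hab))
    (strictMonoOn_div_sin ha hb hab).le (div_pos ha.1 (sin_pos_of_pos_of_lt_pi ha.1 ha.2))
    (exp_pos _).le

lemma exp_neg_one_lt_boundaryValue {θ : ℝ} (hθ : θ ∈ Ioo 0 π) :
    exp (-1) < boundaryValue θ := by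
  have hsin := sin_pos_of_pos_of_lt_pi hθ.1 hθ.2
  have hρ : 0 < θ / sin θ := div_pos hθ.1 hsin
  have hcot : θ * cot θ < 1 := by
    rw [cot_eq_cos_div_sin, mul_div_assoc', div_lt_one hsin]
    exact mul_cos_lt_sin hθ
  have hsinc : sin θ / θ < 1 := (div_lt_one hθ.1).2 (sin_lt hθ.1)
  have hlog := one_sub_inv_le_log_of_pos hρ
  rw [inv_div] at hlog
  rw [boundaryValue, ← exp_log hρ, ← exp_add]
  exact exp_lt_exp.2 (by linarith)

lemma norm_eq_div_sin_of_mem_principalBranchBoundary {z : ℂ}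
    (hz : z ∈ principalBranchBoundary) :
    ‖z‖ = z.im / sin z.im := by
  have h := congrArg norm (mul_exp_eq_neg_boundaryValue hz)
  rw [norm_mul, Complex.norm_exp, norm_neg, Complex.norm_real, Real.norm_of_nonneg
    (boundaryValue_pos hz.1).le, boundaryValue, ← hz.2] at h
  exact mul_right_cancel₀ (exp_pos z.re).ne' (h.trans (mul_comm _ _))

section

variable {Z z : ℂ}

lemma im_ne_zero_of_mul_exp_eq (hZ : Z ∈ principalBranchBoundary)
    (h : z * Complex.exp z = Z * Complex.exp Z) : z.im ≠ 0 := by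
  intro him
  have hre := congrArg Complex.re h
  rw [re_mul_exp, him, cos_zero, sin_zero, mul_exp_eq_neg_boundaryValue hZ, Complex.neg_re,
    Complex.ofReal_re] at hre
  have := mul_exp_neg_le_exp_neg_one (-z.re)
  rw [neg_neg] at this
  linarith [exp_neg_one_lt_boundaryValue hZ.1]

lemma eq_of_mul_exp_eq_of_im_mem_Ioo (hZ : Z ∈ principalBranchBoundary) (hz : z.im ∈ Ioo 0 π)
    (h : z * Complex.exp z = Z * Complex.exp Z) : z = Z := by
  rw [mul_exp_eq_neg_boundaryValue hZ] at h
  have hz' : z ∈ principalBranchBoundary :=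
    mem_principalBranchBoundary_of_im_mul_exp_eq_zero hz (by simp [h])
  rw [mul_exp_eq_neg_boundaryValue hz', neg_inj, Complex.ofReal_inj] at h
  have him : z.im = Z.im := strictMonoOn_boundaryValue.injOn hz hZ.1 h
  exact Complex.ext (by rw [hz'.2, hZ.2, him]) him

lemma re_le_of_mul_exp_eq_of_pi_le_abs_im (hZ : Z ∈ principalBranchBoundary) (hz : π ≤ |z.im|)
    (h : z * Complex.exp z = Z * Complex.exp Z) : z.re ≤ Z.re := by
  by_contra! hlt
  obtain ⟨⟨hZim_pos, hZim_lt⟩, hZre_eq⟩ := hZ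
  have hsin := sin_pos_of_pos_of_lt_pi hZim_pos hZim_lt
  have hz_norm : π ≤ ‖z‖ := hz.trans (Complex.abs_im_le_norm z)
  have hnorm : ‖z‖ < ‖Z‖ := by
    have hnorm_eq := congrArg norm h
    rw [norm_mul, norm_mul, Complex.norm_exp, Complex.norm_exp] at hnorm_eq
    by_contra! hge
    have := mul_lt_mul_of_pos_left (exp_lt_exp.2 hlt) (pi_pos.trans_le hz_norm)
    nlinarith [exp_pos Z.re]
  have hre_sq : z.re ^ 2 < Z.re ^ 2 := by
    have hsq := pow_lt_pow_left₀ hnorm (norm_nonneg z) two_ne_zero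
    rw [Complex.sq_norm, Complex.sq_norm, Complex.normSq_apply, Complex.normSq_apply] at hsq
    have hz_sq : π ^ 2 ≤ z.im ^ 2 := by
      simpa only [sq_abs] using pow_le_pow_left₀ pi_pos.le hz 2
    nlinarith
  have hZre : Z.re < 0 := by nlinarith
  have hZim : Z.im ≤ π / 2 := by
    by_contra! hZim
    have hcos := cos_nonpos_of_pi_div_two_le_of_le hZim.le (by linarith [pi_pos])
    rw [hZre_eq, cot_eq_cos_div_sin] at hZre
    have : Z.im * (cos Z.im / sin Z.im) ≤ 0 :=
      mul_nonpos_of_nonneg_of_nonpos hZim_pos.le (div_nonpos_of_nonpos_of_nonneg hcos hsin.le)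
    linarith
  have hZnorm : ‖Z‖ ≤ π / 2 := by
    rw [norm_eq_div_sin_of_mem_principalBranchBoundary ⟨⟨hZim_pos, hZim_lt⟩, hZre_eq⟩,
      div_le_iff₀ hsin]
    have := mul_le_sin hZim_pos.le hZim
    field_simp at this
    linarith
  linarith [pi_pos]

theorem re_le_of_mul_exp_eq (hZ : Z ∈ principalBranchBoundary)
    (h : z * Complex.exp z = Z * Complex.exp Z) : z.re ≤ Z.re := by
  rcases le_or_gt π |z.im| with hfar | hnear
  · exact re_le_of_mul_exp_eq_of_pi_le_abs_im hZ hfar h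
  obtain ⟨hlow, hhigh⟩ := abs_lt.1 hnear
  rcases (im_ne_zero_of_mul_exp_eq hZ h).lt_or_gt with hneg | hpos
  · have hconj : conj z * Complex.exp (conj z) = Z * Complex.exp Z := by
      rw [Complex.exp_conj, ← map_mul, h, mul_exp_eq_neg_boundaryValue hZ, map_neg,
        Complex.conj_ofReal]
    have := eq_of_mul_exp_eq_of_im_mem_Ioo hZ
      ⟨by simpa using hneg, by simpa using neg_lt.1 hlow⟩ hconj
    rw [← this, Complex.conj_re]
  · exact (congrArg Complex.re (eq_of_mul_exp_eq_of_im_mem_Ioo hZ ⟨hpos, hhigh⟩ h)).le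

end

lemma mul_exp_eq_of_sub_eq_mul_exp {α β h : ℝ} {s : ℂ}
    (hs : s - α = β * Complex.exp (-s * h)) :
    (s - α) * h * Complex.exp ((s - α) * h) = β * h * Complex.exp (-α * h) := by
  have hexp : Complex.exp (-s * h) * Complex.exp ((s - α) * h) = Complex.exp (-α * h) := by
    rw [← Complex.exp_add]
    ring_nf
  linear_combination (h * Complex.exp ((s - α) * h)) * hs + (β * h) * hexp

/-- Rightmostness of the assigned complex eigenvalue: if `h > 0` and
`S = u + i·v` with `0 < v·h < π` and `u − α = −v·cot(v·h)` (so `(S−α)h` lies on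
the upper boundary of the range of the principal branch `W₀`) solves the
characteristic equation `S − α = β·e^{−S·h}`, then every complex solution `s`
of the characteristic equation satisfies `Re(s) ≤ u`. -/
theorem complex_root_is_rightmost (h α β u v : ℝ) (hh : 0 < h)
    (hv1 : 0 < v * h) (hv2 : v * h < Real.pi)
    (hu : u - α = -v * Real.cot (v * h))
    (hS : ((u : ℂ) + (v : ℂ) * Complex.I) - (α : ℂ) =
        (β : ℂ) * Complex.exp (-((u : ℂ) + (v : ℂ) * Complex.I) * (h : ℂ))) :
    ∀ s : ℂ, s - (α : ℂ) = (β : ℂ) * Complex.exp (-s * (h : ℂ)) → s.re ≤ u := by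
  intro s hs
  set S : ℂ := (u : ℂ) + (v : ℂ) * Complex.I
  have hSim : ((S - α) * h).im = v * h := by simp [S]
  have hSre : ((S - α) * h).re = (u - α) * h := by simp [S]
  have hbdry : (S - α) * h ∈ principalBranchBoundary := by
    refine ⟨hSim ▸ ⟨hv1, hv2⟩, ?_⟩
    rw [hSim, hSre, hu]
    ring
  have key := re_le_of_mul_exp_eq hbdry
    ((mul_exp_eq_of_sub_eq_mul_exp hs).trans (mul_exp_eq_of_sub_eq_mul_exp hS).symm)
  have hsre : ((s - α) * h).re = (s.re - α) * h := by simp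
  rw [hsre, hSre] at key
  linarith [le_of_mul_le_mul_right key hh]
end
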